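/- arXiv:2411.08623 — 2 statements merged into one kernel-verified Lean document; each statement's English description precedes it below -/
import Mathlib

section
/- Let u : ℤᵈ → ℝᵈ have finite support. For x ∈ ℤᵈ define the matrix B(x) with entries b_{ij}(x) = u_i(x + e_j) − u_i(x), and A(x) = (B(x) + B(x)ᵀ)/2. Then ∑_{x∈ℤᵈ} A(x):A(x) ≥ (1/2) ∑_{x∈ℤᵈ} ∑_{i,j=1}^d (u_i(x + e_j) − u_i(x))², where A:A = ∑_{ij} a_{ij}². -/
open Function

private lemma summable_mul_shift {d : ℕ} {u : (Fin d → ℤ) → (Fin d → ℝ)}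
    (hsupp : (Function.support u).Finite) (a b : Fin d → ℤ) (i j : Fin d) :
    Summable (fun x : Fin d → ℤ => u (x + a) i * u (x + b) j) := by
  apply summable_of_finite_support
  apply (hsupp.image (fun y => y - a)).subset
  intro x hx
  have h1 : u (x + a) i ≠ 0 := left_ne_zero_of_mul hx
  exact ⟨x + a, fun h => h1 (by rw [h]; rfl), add_sub_cancel_right x a⟩

private lemma summable_D {d : ℕ} {u : (Fin d → ℤ) → (Fin d → ℝ)}
    (hsupp : (Function.support u).Finite) (a b : Fin d → ℤ) (i j : Fin d) :
    Summable (fun x : Fin d → ℤ => (u (x + a) i - u x i) * (u (x + b) j - u x j)) := by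
  have s1 := summable_mul_shift hsupp a b i j
  have s2 := summable_mul_shift hsupp a 0 i j
  have s3 := summable_mul_shift hsupp 0 b i j
  have s4 := summable_mul_shift hsupp 0 0 i j
  simp only [add_zero] at s2 s3 s4
  exact ((s1.sub s2).sub (s3.sub s4)).congr fun x => by ring

private lemma tsum_mul_shift {d : ℕ} {u : (Fin d → ℤ) → (Fin d → ℝ)}
    (i j : Fin d) (a b a' b' c : Fin d → ℤ) (ha : a = a' + c) (hb : b = b' + c) :
    ∑' x : Fin d → ℤ, u (x + a) i * u (x + b) j
      = ∑' x : Fin d → ℤ, u (x + a') i * u (x + b') j := by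
  subst ha hb
  rw [← (Equiv.addRight c).tsum_eq (fun x => u (x + a') i * u (x + b') j)]
  exact tsum_congr fun x => by
    simp only [Equiv.coe_addRight]
    rw [show x + (a' + c) = x + c + a' by abel, show x + (b' + c) = x + c + b' by abel]

private lemma cross_shift {d : ℕ} {u : (Fin d → ℤ) → (Fin d → ℝ)}
    (hsupp : (Function.support u).Finite) (i j : Fin d) :
    ∑' x : Fin d → ℤ, (u (x + Pi.single j 1) i - u x i) * (u (x + Pi.single i 1) j - u x j)
      = ∑' x : Fin d → ℤ,
        (u (x + -Pi.single i 1) i - u x i) * (u (x + -Pi.single j 1) j - u x j) := by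
  set ei : Fin d → ℤ := Pi.single i 1
  set ej : Fin d → ℤ := Pi.single j 1
  have s1 := summable_mul_shift hsupp ej ei i j
  have s2 := summable_mul_shift hsupp ej 0 i j
  have s3 := summable_mul_shift hsupp 0 ei i j
  have s4 := summable_mul_shift hsupp 0 0 i j
  have s1' := summable_mul_shift hsupp (-ei) (-ej) i j
  have s2' := summable_mul_shift hsupp (-ei) 0 i j
  have s3' := summable_mul_shift hsupp 0 (-ej) i j
  simp only [add_zero] at s2 s3 s4 s2' s3'
  have expand : ∀ (a b : Fin d → ℤ),
      (fun x : Fin d → ℤ => (u (x + a) i - u x i) * (u (x + b) j - u x j))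
        = fun x => (u (x + a) i * u (x + b) j - u (x + a) i * u x j)
            - (u x i * u (x + b) j - u x i * u x j) := by
    intro a b; funext x; ring
  rw [expand, expand, Summable.tsum_sub (s1.sub s2) (s3.sub s4), Summable.tsum_sub s1 s2, Summable.tsum_sub s3 s4,
    Summable.tsum_sub (s1'.sub s2') (s3'.sub s4), Summable.tsum_sub s1' s2', Summable.tsum_sub s3' s4]
  have t1 : ∑' x : Fin d → ℤ, u (x + ej) i * u (x + ei) j
      = ∑' x : Fin d → ℤ, u (x + -ei) i * u (x + -ej) j :=
    tsum_mul_shift i j ej ei (-ei) (-ej) (ei + ej) (by abel) (by abel)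
  have t2 : ∑' x : Fin d → ℤ, u (x + ej) i * u x j
      = ∑' x : Fin d → ℤ, u x i * u (x + -ej) j := by
    have := tsum_mul_shift (u := u) i j ej 0 0 (-ej) ej (by abel) (by abel)
    simpa only [add_zero] using this
  have t3 : ∑' x : Fin d → ℤ, u x i * u (x + ei) j
      = ∑' x : Fin d → ℤ, u (x + -ei) i * u x j := by
    have := tsum_mul_shift (u := u) i j 0 ei (-ei) 0 ei (by abel) (by abel)
    simpa only [add_zero] using this
  rw [t1, t2, t3]
  ring

/-- Discrete Korn-type inequality on `ℤᵈ`: with `B(x)_{ij} = u_i(x+e_j) - u_i(x)` and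
`A(x) = (B(x) + B(x)ᵀ)/2`, one has `∑ₓ A:A ≥ (1/2) ∑ₓ ∑_{ij} (u_i(x+e_j) - u_i(x))²`. -/
theorem discrete_korn_identity (d : ℕ) (u : (Fin d → ℤ) → (Fin d → ℝ))
    (hsupp : (Function.support u).Finite) :
    (1 / 2) * ∑' x : Fin d → ℤ, ∑ i, ∑ j, (u (x + Pi.single j 1) i - u x i) ^ 2 ≤
      ∑' x : Fin d → ℤ, ∑ i, ∑ j,
        (((u (x + Pi.single j 1) i - u x i) + (u (x + Pi.single i 1) j - u x j)) / 2) ^ 2 := by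
  have SFij : ∀ i j : Fin d,
      Summable (fun x : Fin d → ℤ => (u (x + Pi.single j 1) i - u x i) ^ 2) :=
    fun i j => (summable_D hsupp (Pi.single j 1) (Pi.single j 1) i i).congr
      fun x => (sq _).symm
  have SCij : ∀ i j : Fin d,
      Summable (fun x : Fin d → ℤ =>
        (u (x + Pi.single j 1) i - u x i) * (u (x + Pi.single i 1) j - u x j)) :=
    fun i j => summable_D hsupp (Pi.single j 1) (Pi.single i 1) i j
  have SF : Summable (fun x : Fin d → ℤ =>
      ∑ i, ∑ j, (u (x + Pi.single j 1) i - u x i) ^ 2) :=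
    summable_sum fun i _ => summable_sum fun j _ => SFij i j
  have SC : Summable (fun x : Fin d → ℤ =>
      ∑ i, ∑ j, (u (x + Pi.single j 1) i - u x i) * (u (x + Pi.single i 1) j - u x j)) :=
    summable_sum fun i _ => summable_sum fun j _ => SCij i j
  have key : ∀ x : Fin d → ℤ,
      (∑ i, ∑ j, (((u (x + Pi.single j 1) i - u x i)
          + (u (x + Pi.single i 1) j - u x j)) / 2) ^ 2)
        = (∑ i, ∑ j, (u (x + Pi.single j 1) i - u x i) ^ 2) / 2
          + (∑ i, ∑ j, (u (x + Pi.single j 1) i - u x i)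
              * (u (x + Pi.single i 1) j - u x j)) / 2 := by
    intro x
    have h1 : ∑ i, ∑ j, (u (x + Pi.single j 1) i - u x i) ^ 2
        = ∑ i, ∑ j, (u (x + Pi.single i 1) j - u x j) ^ 2 := Finset.sum_comm
    calc (∑ i, ∑ j, (((u (x + Pi.single j 1) i - u x i)
          + (u (x + Pi.single i 1) j - u x j)) / 2) ^ 2)
        = ∑ i, ∑ j, ((u (x + Pi.single j 1) i - u x i) ^ 2 / 4
            + (u (x + Pi.single i 1) j - u x j) ^ 2 / 4
            + (u (x + Pi.single j 1) i - u x i) * (u (x + Pi.single i 1) j - u x j) / 2) :=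
          Finset.sum_congr rfl fun i _ => Finset.sum_congr rfl fun j _ => by ring
      _ = (∑ i, ∑ j, (u (x + Pi.single j 1) i - u x i) ^ 2) / 4
            + (∑ i, ∑ j, (u (x + Pi.single i 1) j - u x j) ^ 2) / 4
            + (∑ i, ∑ j, (u (x + Pi.single j 1) i - u x i)
                * (u (x + Pi.single i 1) j - u x j)) / 2 := by
          simp only [Finset.sum_add_distrib, Finset.sum_div]
      _ = _ := by rw [← h1]; ring
  rw [tsum_congr key, Summable.tsum_add (SF.div_const 2) (SC.div_const 2), tsum_div_const,
    tsum_div_const]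
  have hC : 0 ≤ ∑' x : Fin d → ℤ,
      ∑ i, ∑ j, (u (x + Pi.single j 1) i - u x i) * (u (x + Pi.single i 1) j - u x j) := by
    have h2 : (∑' x : Fin d → ℤ,
        ∑ i, ∑ j, (u (x + Pi.single j 1) i - u x i) * (u (x + Pi.single i 1) j - u x j))
          = ∑' x : Fin d → ℤ, (∑ i, (u (x + -Pi.single i 1) i - u x i)) ^ 2 := by
      calc (∑' x : Fin d → ℤ,
          ∑ i, ∑ j, (u (x + Pi.single j 1) i - u x i) * (u (x + Pi.single i 1) j - u x j))
          = ∑ i, ∑ j, ∑' x : Fin d → ℤ,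
              (u (x + Pi.single j 1) i - u x i) * (u (x + Pi.single i 1) j - u x j) := by
            rw [Summable.tsum_finsetSum fun i _ => summable_sum fun j _ => SCij i j]
            exact Finset.sum_congr rfl fun i _ => Summable.tsum_finsetSum fun j _ => SCij i j
        _ = ∑ i, ∑ j, ∑' x : Fin d → ℤ,
              (u (x + -Pi.single i 1) i - u x i) * (u (x + -Pi.single j 1) j - u x j) :=
            Finset.sum_congr rfl fun i _ => Finset.sum_congr rfl fun j _ =>
              cross_shift hsupp i j
        _ = ∑' x : Fin d → ℤ, ∑ i, ∑ j,
              (u (x + -Pi.single i 1) i - u x i) * (u (x + -Pi.single j 1) j - u x j) := by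
            rw [Summable.tsum_finsetSum fun i _ => summable_sum fun j _ =>
              summable_D hsupp (-Pi.single i 1) (-Pi.single j 1) i j]
            exact Finset.sum_congr rfl fun i _ =>
              (Summable.tsum_finsetSum fun j _ => summable_D hsupp (-Pi.single i 1) (-Pi.single j 1) i j).symm
        _ = ∑' x : Fin d → ℤ, (∑ i, (u (x + -Pi.single i 1) i - u x i)) ^ 2 :=
            tsum_congr fun x => by rw [sq, Finset.sum_mul_sum]
    rw [h2]
    exact tsum_nonneg fun x => sq_nonneg _
  linarith
end

section
/- There exists a constant C < ∞ such that for every ε > 0 and every u_ε : ℤᵈ_ε → ℝᵈ with u_ε = 0 on ℤᵈ_ε ∖ Q_ε, it holds that εᵈ ∑_{x∈Q_ε} ∑_{i=1}^d ε^{−2} |u_ε(x+εe_i) − u_ε(x)|² ≤ C ε^{d−2} ∑_{x∈ℤᵈ_ε} ∑_{b∈B} |((u_ε(x+εb) − u_ε(x))/|b|) · (b/|b|)|². -/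
namespace DiscreteKornAux

variable {d : ℕ}

private lemma tsum_shift (f : (Fin d → ℤ) → ℝ) (a : Fin d → ℤ) :
    ∑' z : Fin d → ℤ, f (z + a) = ∑' z : Fin d → ℤ, f z :=
  (Equiv.addRight a).tsum_eq f

private lemma abs_single_le (i k : Fin d) : |(Pi.single i 1 : Fin d → ℤ) k| ≤ 1 := by
  classical
  rw [Pi.single_apply]; split_ifs <;> norm_num

private lemma sq3 (a p q : ℝ) : (a - p - q) ^ 2 ≤ 3 * a ^ 2 + 3 * p ^ 2 + 3 * q ^ 2 := by
  nlinarith [sq_nonneg (a + p), sq_nonneg (a + q), sq_nonneg (p - q)]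

open Classical in
noncomputable def Rsum (u : (Fin d → ℤ) → Fin d → ℝ) : ℝ :=
  ∑' z : Fin d → ℤ,
    ∑ b ∈ (Finset.Icc (-1 : Fin d → ℤ) 1).erase 0,
      ((∑ i, (u (z + b) i - u z i) * (b i : ℝ)) / (∑ i, ((b i : ℝ)) ^ 2)) ^ 2

open Classical in
private lemma core (u : (Fin d → ℤ) → Fin d → ℝ) (S : Finset (Fin d → ℤ))
    (hS : ∀ z ∉ S, u z = 0) :
    ∑' z : Fin d → ℤ, ∑ i, ∑ j, (u (z + Pi.single i 1) j - u z j) ^ 2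
      ≤ 9 * (d : ℝ) ^ 2 * Rsum u := by
  classical
  -- support machinery
  set A2 : Finset (Fin d → ℤ) := Finset.Icc (fun _ => (-2 : ℤ)) (fun _ => 2) with hA2def
  set T : Finset (Fin d → ℤ) := A2.biUnion (fun a => S.image (fun z => z - a)) with hTdef
  have hT : ∀ z ∉ T, ∀ a ∈ A2, u (z + a) = 0 := by
    intro z hz a ha
    by_contra h
    have hmem : z + a ∈ S := by by_contra hm; exact h (hS _ hm)
    exact hz (Finset.mem_biUnion.mpr ⟨a, ha, Finset.mem_image.mpr ⟨z + a, hmem, by abel⟩⟩)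
  have hA2mem : ∀ a : Fin d → ℤ, (∀ i, |a i| ≤ 2) → a ∈ A2 := by
    intro a h
    simp only [hA2def, Finset.mem_Icc, Pi.le_def]
    constructor <;> intro i <;> · have := abs_le.mp (h i); omega
  have hTs : ∀ z ∉ T, ∀ a : Fin d → ℤ, (∀ i, |a i| ≤ 2) → u (z + a) = 0 :=
    fun z hz a ha => hT z hz a (hA2mem a ha)
  have hT0 : ∀ z ∉ T, u z = 0 := by
    intro z hz
    have := hTs z hz 0 (by intro i; simp)
    simpa using this
  have hTe : ∀ z ∉ T, ∀ i, u (z + Pi.single i 1) = 0 :=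
    fun z hz i => hTs z hz _ (fun k => le_trans (abs_single_le i k) one_le_two)
  have hTee : ∀ z ∉ T, ∀ i j, u (z + (Pi.single i 1 + Pi.single j 1)) = 0 := by
    intro z hz i j
    refine hTs z hz _ (fun k => ?_)
    calc |(Pi.single i 1 + Pi.single j 1 : Fin d → ℤ) k|
        = |(Pi.single i 1 : Fin d → ℤ) k + (Pi.single j 1 : Fin d → ℤ) k| := rfl
      _ ≤ |(Pi.single i 1 : Fin d → ℤ) k| + |(Pi.single j 1 : Fin d → ℤ) k| := abs_add_le _ _
      _ ≤ 2 := by have h1 := abs_single_le i k; have h2 := abs_single_le j k; omega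
  have hTn : ∀ z ∉ T, ∀ i, u (z - Pi.single i 1) = 0 := by
    intro z hz i
    rw [sub_eq_add_neg]
    refine hTs z hz _ (fun k => ?_)
    rw [Pi.neg_apply, abs_neg]
    exact le_trans (abs_single_le i k) one_le_two
  have hTb : ∀ z ∉ T, ∀ b ∈ (Finset.Icc (-1 : Fin d → ℤ) 1).erase 0, u (z + b) = 0 := by
    intro z hz b hb
    obtain ⟨-, hb2⟩ := Finset.mem_erase.mp hb
    rw [Finset.mem_Icc] at hb2
    refine hTs z hz _ (fun k => ?_)
    have h1 : (-1 : ℤ) ≤ b k := by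
      have := Pi.le_def.mp hb2.1 k
      simpa using this
    have h2 : b k ≤ 1 := by
      have := Pi.le_def.mp hb2.2 k
      simpa using this
    rw [abs_le]; omega
  have smf : ∀ f : (Fin d → ℤ) → ℝ, (∀ z ∉ T, f z = 0) → Summable f :=
    fun f h => summable_of_ne_finset_zero h
  -- Summability and basic bounds for the energy
  have sD2 : ∀ i j : Fin d, Summable fun z : Fin d → ℤ => (u (z + Pi.single i 1) j - u z j) ^ 2 :=
    fun i j => smf _ (fun z hz => by rw [hTe z hz i, hT0 z hz]; simp)
  have hRnn : 0 ≤ Rsum u := tsum_nonneg fun z => Finset.sum_nonneg fun b _ => sq_nonneg _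
  have sR : Summable fun z : Fin d → ℤ =>
      ∑ b ∈ (Finset.Icc (-1 : Fin d → ℤ) 1).erase 0,
        ((∑ k, (u (z + b) k - u z k) * (b k : ℝ)) / (∑ k, ((b k : ℝ)) ^ 2)) ^ 2 := by
    refine smf _ fun z hz => ?_
    refine Finset.sum_eq_zero fun b hb => ?_
    rw [hTb z hz b hb, hT0 z hz]
    simp
  have hone : ∀ b ∈ (Finset.Icc (-1 : Fin d → ℤ) 1).erase 0,
      ∑' z : Fin d → ℤ,
          ((∑ k, (u (z + b) k - u z k) * (b k : ℝ)) / (∑ k, ((b k : ℝ)) ^ 2)) ^ 2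
        ≤ Rsum u := by
    intro b hb
    refine Summable.tsum_le_tsum (fun z => Finset.single_le_sum
      (f := fun b' : Fin d → ℤ =>
        ((∑ k, (u (z + b') k - u z k) * ((b' k : ℤ) : ℝ)) / (∑ k, (((b' k : ℤ)) : ℝ) ^ 2)) ^ 2)
      (fun b' _ => sq_nonneg _) hb) ?_ sR
    exact smf _ fun z hz => by rw [hTb z hz b hb, hT0 z hz]; simp
  -- membership of basis vectors and diagonal vectors in B
  have hBe : ∀ i : Fin d, (Pi.single i 1 : Fin d → ℤ) ∈ (Finset.Icc (-1 : Fin d → ℤ) 1).erase 0 := by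
    intro i
    refine Finset.mem_erase.mpr ⟨?_, ?_⟩
    · intro h
      have := congrFun h i
      simp at this
    · refine Finset.mem_Icc.mpr ⟨Pi.le_def.mpr fun k => ?_, Pi.le_def.mpr fun k => ?_⟩ <;>
      · have := abs_le.mp (abs_single_le i k)
        simp only [Pi.neg_apply, Pi.one_apply]
        omega
  have hBee : ∀ i j : Fin d, i ≠ j →
      (Pi.single i 1 + Pi.single j 1 : Fin d → ℤ) ∈ (Finset.Icc (-1 : Fin d → ℤ) 1).erase 0 := by
    intro i j hij
    refine Finset.mem_erase.mpr ⟨?_, ?_⟩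
    · intro h
      have h2 := congrFun h i
      rw [Pi.add_apply, Pi.single_eq_same, Pi.single_eq_of_ne hij] at h2
      simp at h2
    · refine Finset.mem_Icc.mpr ⟨Pi.le_def.mpr fun k => ?_, Pi.le_def.mpr fun k => ?_⟩ <;>
      · have hk : (Pi.single i 1 + Pi.single j 1 : Fin d → ℤ) k
            = (Pi.single i 1 : Fin d → ℤ) k + (Pi.single j 1 : Fin d → ℤ) k := rfl
        rw [Pi.single_apply, Pi.single_apply] at hk
        simp only [Pi.neg_apply, Pi.one_apply, hk]
        rcases eq_or_ne k i with h1 | h1 <;> rcases eq_or_ne k j with h2 | h2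
        · exact absurd (h1.symm.trans h2) hij
        all_goals simp [h1, h2, hij, Ne.symm hij]
  -- value of the longitudinal energy numerators and denominators
  have hEe : ∀ (i : Fin d) (z : Fin d → ℤ),
      (∑ k, (u (z + Pi.single i 1) k - u z k) * ((Pi.single i 1 : Fin d → ℤ) k : ℝ))
        = u (z + Pi.single i 1) i - u z i := by
    intro i z
    rw [Finset.sum_eq_single i]
    · simp
    · intro k _ hk
      rw [Pi.single_eq_of_ne hk]
      simp
    · simp
  have hNe : ∀ i : Fin d, (∑ k, (((Pi.single i 1 : Fin d → ℤ) k : ℝ)) ^ 2) = 1 := by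
    intro i
    rw [Finset.sum_eq_single i]
    · simp
    · intro k _ hk
      rw [Pi.single_eq_of_ne hk]
      simp
    · simp
  have hlong : ∀ i : Fin d,
      ∑' z : Fin d → ℤ, (u (z + Pi.single i 1) i - u z i) ^ 2 ≤ Rsum u := by
    intro i
    refine le_trans (le_of_eq ?_) (hone _ (hBe i))
    refine tsum_congr fun z => ?_
    rw [hEe i z, hNe i, div_one]
  have hvb : ∀ (i j : Fin d), i ≠ j → ∀ k : Fin d,
      (((Pi.single i 1 + Pi.single j 1 : Fin d → ℤ) k : ℝ))
        = (if k = i then 1 else 0) + (if k = j then 1 else 0) := by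
    intro i j hij k
    have hk : (Pi.single i 1 + Pi.single j 1 : Fin d → ℤ) k
        = (if k = i then 1 else 0) + (if k = j then 1 else 0) := by
      rw [Pi.add_apply, Pi.single_apply, Pi.single_apply]
    rw [hk]
    rcases eq_or_ne k i with h1 | h1 <;> rcases eq_or_ne k j with h2 | h2
    · exact absurd (h1.symm.trans h2) hij
    all_goals simp [h1, h2]
  have hEee : ∀ (i j : Fin d), i ≠ j → ∀ z : Fin d → ℤ,
      (∑ k, (u (z + (Pi.single i 1 + Pi.single j 1)) k - u z k)
          * (((Pi.single i 1 + Pi.single j 1 : Fin d → ℤ) k : ℝ)))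
        = (u (z + (Pi.single i 1 + Pi.single j 1)) i - u z i)
          + (u (z + (Pi.single i 1 + Pi.single j 1)) j - u z j) := by
    intro i j hij z
    have hv : ∀ k, (u (z + (Pi.single i 1 + Pi.single j 1)) k - u z k)
          * (((Pi.single i 1 + Pi.single j 1 : Fin d → ℤ) k : ℝ))
        = (if k = i then u (z + (Pi.single i 1 + Pi.single j 1)) i - u z i else 0)
          + (if k = j then u (z + (Pi.single i 1 + Pi.single j 1)) j - u z j else 0) := by
      intro k
      rw [hvb i j hij k]
      rcases eq_or_ne k i with h1 | h1 <;> rcases eq_or_ne k j with h2 | h2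
      · exact absurd (h1.symm.trans h2) hij
      all_goals simp [h1, h2, hij, Ne.symm hij]
    rw [Finset.sum_congr rfl fun k _ => hv k, Finset.sum_add_distrib,
      Finset.sum_ite_eq' Finset.univ i, Finset.sum_ite_eq' Finset.univ j]
    simp
  have hNee : ∀ (i j : Fin d), i ≠ j →
      (∑ k, ((((Pi.single i 1 + Pi.single j 1 : Fin d → ℤ) k : ℝ))) ^ 2) = 2 := by
    intro i j hij
    have hv : ∀ k : Fin d, ((((Pi.single i 1 + Pi.single j 1 : Fin d → ℤ) k : ℝ))) ^ 2
        = (if k = i then 1 else 0) + (if k = j then 1 else 0) := by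
      intro k
      rw [hvb i j hij k]
      rcases eq_or_ne k i with h1 | h1 <;> rcases eq_or_ne k j with h2 | h2
      · exact absurd (h1.symm.trans h2) hij
      all_goals simp [h1, h2, hij, Ne.symm hij]
    rw [Finset.sum_congr rfl fun k _ => hv k, Finset.sum_add_distrib,
      Finset.sum_ite_eq' Finset.univ i, Finset.sum_ite_eq' Finset.univ j]
    norm_num
  -- summation by parts identity
  have keyA : ∀ i j : Fin d,
      ∑' z : Fin d → ℤ, (u (z + Pi.single i 1) j - u z j) * (u (z + Pi.single j 1) i - u z i)
        = ∑' z : Fin d → ℤ, (u z i - u (z - Pi.single i 1) i) * (u z j - u (z - Pi.single j 1) j) := by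
    intro i j
    have sA : Summable fun z : Fin d → ℤ => u (z + Pi.single i 1) j * u (z + Pi.single j 1) i :=
      smf _ fun z hz => by rw [hTe z hz i]; simp
    have sB : Summable fun z : Fin d → ℤ => u (z + Pi.single i 1) j * u z i :=
      smf _ fun z hz => by rw [hTe z hz i]; simp
    have sC : Summable fun z : Fin d → ℤ => u z j * u (z + Pi.single j 1) i :=
      smf _ fun z hz => by rw [hT0 z hz]; simp
    have sD : Summable fun z : Fin d → ℤ => u z j * u z i :=
      smf _ fun z hz => by rw [hT0 z hz]; simp
    have sA' : Summable fun z : Fin d → ℤ => u (z - Pi.single i 1) i * u (z - Pi.single j 1) j :=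
      smf _ fun z hz => by rw [hTn z hz i]; simp
    have sB' : Summable fun z : Fin d → ℤ => u (z - Pi.single i 1) i * u z j :=
      smf _ fun z hz => by rw [hTn z hz i]; simp
    have sC' : Summable fun z : Fin d → ℤ => u z i * u (z - Pi.single j 1) j :=
      smf _ fun z hz => by rw [hT0 z hz]; simp
    have hA : ∑' z : Fin d → ℤ, u (z + Pi.single i 1) j * u (z + Pi.single j 1) i
        = ∑' z : Fin d → ℤ, u (z - Pi.single i 1) i * u (z - Pi.single j 1) j := by
      refine Eq.trans ?_ (tsum_shift (fun z => u (z - Pi.single i 1) i * u (z - Pi.single j 1) j)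
        (Pi.single i 1 + Pi.single j 1))
      refine tsum_congr fun z => ?_
      have h1 : z + (Pi.single i 1 + Pi.single j 1) - Pi.single i 1 = z + Pi.single j 1 := by abel
      have h2 : z + (Pi.single i 1 + Pi.single j 1) - Pi.single j 1 = z + Pi.single i 1 := by abel
      rw [h1, h2]; ring
    have hB : ∑' z : Fin d → ℤ, u (z + Pi.single i 1) j * u z i
        = ∑' z : Fin d → ℤ, u (z - Pi.single i 1) i * u z j := by
      refine Eq.trans ?_ (tsum_shift (fun z => u (z - Pi.single i 1) i * u z j) (Pi.single i 1))
      refine tsum_congr fun z => ?_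
      have h1 : z + Pi.single i 1 - Pi.single i 1 = z := by abel
      rw [h1]; ring
    have hC : ∑' z : Fin d → ℤ, u z j * u (z + Pi.single j 1) i
        = ∑' z : Fin d → ℤ, u z i * u (z - Pi.single j 1) j := by
      refine Eq.trans ?_ (tsum_shift (fun z => u z i * u (z - Pi.single j 1) j) (Pi.single j 1))
      refine tsum_congr fun z => ?_
      have h1 : z + Pi.single j 1 - Pi.single j 1 = z := by abel
      rw [h1]; ring
    calc ∑' z : Fin d → ℤ, (u (z + Pi.single i 1) j - u z j) * (u (z + Pi.single j 1) i - u z i)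
        = ∑' z : Fin d → ℤ, (u (z + Pi.single i 1) j * u (z + Pi.single j 1) i
            - u (z + Pi.single i 1) j * u z i
            - u z j * u (z + Pi.single j 1) i
            + u z j * u z i) := tsum_congr fun z => by ring
      _ = (∑' z : Fin d → ℤ, u (z + Pi.single i 1) j * u (z + Pi.single j 1) i)
            - (∑' z : Fin d → ℤ, u (z + Pi.single i 1) j * u z i)
            - (∑' z : Fin d → ℤ, u z j * u (z + Pi.single j 1) i)
            + (∑' z : Fin d → ℤ, u z j * u z i) := by
          rw [Summable.tsum_add ((sA.sub sB).sub sC) sD, Summable.tsum_sub (sA.sub sB) sC, Summable.tsum_sub sA sB]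
      _ = (∑' z : Fin d → ℤ, u (z - Pi.single i 1) i * u (z - Pi.single j 1) j)
            - (∑' z : Fin d → ℤ, u (z - Pi.single i 1) i * u z j)
            - (∑' z : Fin d → ℤ, u z i * u (z - Pi.single j 1) j)
            + (∑' z : Fin d → ℤ, u z j * u z i) := by rw [hA, hB, hC]
      _ = (∑' z : Fin d → ℤ, u z j * u z i)
            - (∑' z : Fin d → ℤ, u z i * u (z - Pi.single j 1) j)
            - (∑' z : Fin d → ℤ, u (z - Pi.single i 1) i * u z j)
            + (∑' z : Fin d → ℤ, u (z - Pi.single i 1) i * u (z - Pi.single j 1) j) := by ring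
      _ = ∑' z : Fin d → ℤ, (u z j * u z i
            - u z i * u (z - Pi.single j 1) j
            - u (z - Pi.single i 1) i * u z j
            + u (z - Pi.single i 1) i * u (z - Pi.single j 1) j) := by
          rw [Summable.tsum_add ((sD.sub sC').sub sB') sA', Summable.tsum_sub (sD.sub sC') sB', Summable.tsum_sub sD sC']
      _ = ∑' z : Fin d → ℤ, (u z i - u (z - Pi.single i 1) i) * (u z j - u (z - Pi.single j 1) j) :=
          tsum_congr fun z => by ring
  -- the cross term is nonnegative
  have sg : ∀ i j : Fin d, Summable fun z : Fin d → ℤ =>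
      (u z i - u (z - Pi.single i 1) i) * (u z j - u (z - Pi.single j 1) j) :=
    fun i j => smf _ fun z hz => by rw [hT0 z hz, hTn z hz i, hTn z hz j]; simp
  have hCross : 0 ≤ ∑ i : Fin d, ∑ j : Fin d, ∑' z : Fin d → ℤ,
      (u (z + Pi.single i 1) j - u z j) * (u (z + Pi.single j 1) i - u z i) := by
    have heq : (∑ i : Fin d, ∑ j : Fin d, ∑' z : Fin d → ℤ,
        (u (z + Pi.single i 1) j - u z j) * (u (z + Pi.single j 1) i - u z i))
        = ∑' z : Fin d → ℤ, (∑ i, (u z i - u (z - Pi.single i 1) i)) ^ 2 := by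
      calc (∑ i : Fin d, ∑ j : Fin d, ∑' z : Fin d → ℤ,
          (u (z + Pi.single i 1) j - u z j) * (u (z + Pi.single j 1) i - u z i))
          = ∑ i : Fin d, ∑ j : Fin d, ∑' z : Fin d → ℤ,
            (u z i - u (z - Pi.single i 1) i) * (u z j - u (z - Pi.single j 1) j) :=
            Finset.sum_congr rfl fun i _ => Finset.sum_congr rfl fun j _ => keyA i j
        _ = ∑ i : Fin d, ∑' z : Fin d → ℤ, ∑ j,
            (u z i - u (z - Pi.single i 1) i) * (u z j - u (z - Pi.single j 1) j) :=
            Finset.sum_congr rfl fun i _ => (Summable.tsum_finsetSum fun j _ => sg i j).symm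
        _ = ∑' z : Fin d → ℤ, ∑ i, ∑ j,
            (u z i - u (z - Pi.single i 1) i) * (u z j - u (z - Pi.single j 1) j) :=
            (Summable.tsum_finsetSum fun i _ => summable_sum fun j _ => sg i j).symm
        _ = ∑' z : Fin d → ℤ, (∑ i, (u z i - u (z - Pi.single i 1) i)) ^ 2 := by
            refine tsum_congr fun z => ?_
            rw [sq, Finset.sum_mul_sum]
    rw [heq]
    exact tsum_nonneg fun z => sq_nonneg _
  -- per-pair bound on the symmetrized difference energy
  have hsymb : ∀ i j : Fin d,
      ∑' z : Fin d → ℤ,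
          ((u (z + Pi.single i 1) j - u z j) + (u (z + Pi.single j 1) i - u z i)) ^ 2
        ≤ 18 * Rsum u := by
    intro i j
    rcases eq_or_ne i j with rfl | hij
    · have h4 : (∑' z : Fin d → ℤ,
          ((u (z + Pi.single i 1) i - u z i) + (u (z + Pi.single i 1) i - u z i)) ^ 2)
          = 4 * ∑' z : Fin d → ℤ, (u (z + Pi.single i 1) i - u z i) ^ 2 :=
        Eq.trans (tsum_congr fun z => by ring) tsum_mul_left
      rw [h4]
      have := hlong i
      linarith
    · have sE2 : Summable fun z : Fin d → ℤ =>
          ((u (z + (Pi.single i 1 + Pi.single j 1)) i - u z i)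
            + (u (z + (Pi.single i 1 + Pi.single j 1)) j - u z j)) ^ 2 :=
        smf _ fun z hz => by rw [hTee z hz i j, hT0 z hz]; simp
      have sp : Summable fun z : Fin d → ℤ =>
          (u (z + Pi.single j 1 + Pi.single i 1) i - u (z + Pi.single j 1) i) ^ 2 :=
        smf _ fun z hz => by rw [add_assoc, hTee z hz j i, hTe z hz j]; simp
      have sq' : Summable fun z : Fin d → ℤ =>
          (u (z + Pi.single i 1 + Pi.single j 1) j - u (z + Pi.single i 1) j) ^ 2 :=
        smf _ fun z hz => by rw [add_assoc, hTee z hz i j, hTe z hz i]; simp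
      have sSym : Summable fun z : Fin d → ℤ =>
          ((u (z + Pi.single i 1) j - u z j) + (u (z + Pi.single j 1) i - u z i)) ^ 2 :=
        smf _ fun z hz => by rw [hTe z hz i, hTe z hz j, hT0 z hz]; simp
      have key : ∀ z : Fin d → ℤ,
          ((u (z + Pi.single i 1) j - u z j) + (u (z + Pi.single j 1) i - u z i)) ^ 2
            ≤ 3 * ((u (z + (Pi.single i 1 + Pi.single j 1)) i - u z i)
                  + (u (z + (Pi.single i 1 + Pi.single j 1)) j - u z j)) ^ 2
              + 3 * (u (z + Pi.single j 1 + Pi.single i 1) i - u (z + Pi.single j 1) i) ^ 2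
              + 3 * (u (z + Pi.single i 1 + Pi.single j 1) j - u (z + Pi.single i 1) j) ^ 2 := by
        intro z
        have h1 : z + Pi.single j 1 + Pi.single i 1 = z + (Pi.single i 1 + Pi.single j 1) := by abel
        have h2 : z + Pi.single i 1 + Pi.single j 1 = z + (Pi.single i 1 + Pi.single j 1) := by abel
        rw [h1, h2]
        have hsym_eq : (u (z + Pi.single i 1) j - u z j) + (u (z + Pi.single j 1) i - u z i)
            = ((u (z + (Pi.single i 1 + Pi.single j 1)) i - u z i)
                + (u (z + (Pi.single i 1 + Pi.single j 1)) j - u z j))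
              - (u (z + (Pi.single i 1 + Pi.single j 1)) i - u (z + Pi.single j 1) i)
              - (u (z + (Pi.single i 1 + Pi.single j 1)) j - u (z + Pi.single i 1) j) := by ring
        rw [hsym_eq]
        exact sq3 _ _ _
      have hE4 : ∑' z : Fin d → ℤ,
          ((u (z + (Pi.single i 1 + Pi.single j 1)) i - u z i)
            + (u (z + (Pi.single i 1 + Pi.single j 1)) j - u z j)) ^ 2 ≤ 4 * Rsum u := by
        have h3 := hone _ (hBee i j hij)
        have h2 : (∑' z : Fin d → ℤ,
            ((∑ k, (u (z + (Pi.single i 1 + Pi.single j 1)) k - u z k)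
                * (((Pi.single i 1 + Pi.single j 1 : Fin d → ℤ) k : ℝ)))
              / (∑ k, ((((Pi.single i 1 + Pi.single j 1 : Fin d → ℤ) k : ℝ))) ^ 2)) ^ 2)
            = (1/4) * ∑' z : Fin d → ℤ,
              ((u (z + (Pi.single i 1 + Pi.single j 1)) i - u z i)
                + (u (z + (Pi.single i 1 + Pi.single j 1)) j - u z j)) ^ 2 :=
          Eq.trans (tsum_congr fun z => by rw [hEee i j hij z, hNee i j hij]; ring) tsum_mul_left
        rw [h2] at h3
        linarith
      have hp1 : (∑' z : Fin d → ℤ,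
          (u (z + Pi.single j 1 + Pi.single i 1) i - u (z + Pi.single j 1) i) ^ 2)
          = ∑' z : Fin d → ℤ, (u (z + Pi.single i 1) i - u z i) ^ 2 :=
        tsum_shift (fun w => (u (w + Pi.single i 1) i - u w i) ^ 2) (Pi.single j 1)
      have hq1 : (∑' z : Fin d → ℤ,
          (u (z + Pi.single i 1 + Pi.single j 1) j - u (z + Pi.single i 1) j) ^ 2)
          = ∑' z : Fin d → ℤ, (u (z + Pi.single j 1) j - u z j) ^ 2 :=
        tsum_shift (fun w => (u (w + Pi.single j 1) j - u w j) ^ 2) (Pi.single i 1)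
      calc ∑' z : Fin d → ℤ,
            ((u (z + Pi.single i 1) j - u z j) + (u (z + Pi.single j 1) i - u z i)) ^ 2
          ≤ ∑' z : Fin d → ℤ,
            (3 * ((u (z + (Pi.single i 1 + Pi.single j 1)) i - u z i)
                  + (u (z + (Pi.single i 1 + Pi.single j 1)) j - u z j)) ^ 2
              + 3 * (u (z + Pi.single j 1 + Pi.single i 1) i - u (z + Pi.single j 1) i) ^ 2
              + 3 * (u (z + Pi.single i 1 + Pi.single j 1) j - u (z + Pi.single i 1) j) ^ 2) :=
            Summable.tsum_le_tsum key sSym (((sE2.mul_left 3).add (sp.mul_left 3)).add (sq'.mul_left 3))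
        _ = 3 * (∑' z : Fin d → ℤ,
                ((u (z + (Pi.single i 1 + Pi.single j 1)) i - u z i)
                  + (u (z + (Pi.single i 1 + Pi.single j 1)) j - u z j)) ^ 2)
            + 3 * (∑' z : Fin d → ℤ,
                (u (z + Pi.single j 1 + Pi.single i 1) i - u (z + Pi.single j 1) i) ^ 2)
            + 3 * (∑' z : Fin d → ℤ,
                (u (z + Pi.single i 1 + Pi.single j 1) j - u (z + Pi.single i 1) j) ^ 2) := by
            rw [Summable.tsum_add ((sE2.mul_left 3).add (sp.mul_left 3)) (sq'.mul_left 3),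
              Summable.tsum_add (sE2.mul_left 3) (sp.mul_left 3), tsum_mul_left, tsum_mul_left,
              tsum_mul_left]
        _ ≤ 18 * Rsum u := by
            rw [hp1, hq1]
            have h5 := hlong i
            have h6 := hlong j
            linarith [hE4]
  -- expansion of the symmetrized term
  have hexp : ∀ i j : Fin d,
      (∑' z : Fin d → ℤ,
          ((u (z + Pi.single i 1) j - u z j) + (u (z + Pi.single j 1) i - u z i)) ^ 2)
        = (∑' z : Fin d → ℤ, (u (z + Pi.single i 1) j - u z j) ^ 2)
          + (∑' z : Fin d → ℤ, (u (z + Pi.single j 1) i - u z i) ^ 2)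
          + 2 * ∑' z : Fin d → ℤ,
              (u (z + Pi.single i 1) j - u z j) * (u (z + Pi.single j 1) i - u z i) := by
    intro i j
    have sc : Summable fun z : Fin d → ℤ =>
        (u (z + Pi.single i 1) j - u z j) * (u (z + Pi.single j 1) i - u z i) :=
      smf _ fun z hz => by rw [hTe z hz i, hT0 z hz]; simp
    calc (∑' z : Fin d → ℤ,
          ((u (z + Pi.single i 1) j - u z j) + (u (z + Pi.single j 1) i - u z i)) ^ 2)
        = ∑' z : Fin d → ℤ, ((u (z + Pi.single i 1) j - u z j) ^ 2
            + (u (z + Pi.single j 1) i - u z i) ^ 2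
            + 2 * ((u (z + Pi.single i 1) j - u z j) * (u (z + Pi.single j 1) i - u z i))) :=
          tsum_congr fun z => by ring
      _ = _ := by
          rw [Summable.tsum_add ((sD2 i j).add (sD2 j i)) (sc.mul_left 2), Summable.tsum_add (sD2 i j) (sD2 j i),
            tsum_mul_left]
  -- swap sum and tsum in the goal
  have hswap : (∑' z : Fin d → ℤ, ∑ i, ∑ j, (u (z + Pi.single i 1) j - u z j) ^ 2)
      = ∑ i, ∑ j, ∑' z : Fin d → ℤ, (u (z + Pi.single i 1) j - u z j) ^ 2 := by
    rw [Summable.tsum_finsetSum (fun i _ => summable_sum fun j _ => sD2 i j)]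
    exact Finset.sum_congr rfl fun i _ => Summable.tsum_finsetSum fun j _ => sD2 i j
  rw [hswap]
  have hsum18 : ∑ i : Fin d, ∑ j : Fin d, (∑' z : Fin d → ℤ,
      ((u (z + Pi.single i 1) j - u z j) + (u (z + Pi.single j 1) i - u z i)) ^ 2)
      ≤ (d : ℝ) ^ 2 * (18 * Rsum u) := by
    calc ∑ i : Fin d, ∑ j : Fin d, (∑' z : Fin d → ℤ,
        ((u (z + Pi.single i 1) j - u z j) + (u (z + Pi.single j 1) i - u z i)) ^ 2)
        ≤ ∑ _i : Fin d, ∑ _j : Fin d, 18 * Rsum u :=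
          Finset.sum_le_sum fun i _ => Finset.sum_le_sum fun j _ => hsymb i j
      _ = (d : ℝ) ^ 2 * (18 * Rsum u) := by
          simp [Finset.sum_const, Finset.card_univ, nsmul_eq_mul]
          ring
  have hcomm : (∑ i : Fin d, ∑ j : Fin d,
        ∑' z : Fin d → ℤ, (u (z + Pi.single j 1) i - u z i) ^ 2)
      = ∑ i : Fin d, ∑ j : Fin d,
        ∑' z : Fin d → ℤ, (u (z + Pi.single i 1) j - u z j) ^ 2 :=
    Finset.sum_comm
  have hEq : ∑ i : Fin d, ∑ j : Fin d, (∑' z : Fin d → ℤ,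
      ((u (z + Pi.single i 1) j - u z j) + (u (z + Pi.single j 1) i - u z i)) ^ 2)
      = (∑ i : Fin d, ∑ j : Fin d, ∑' z : Fin d → ℤ, (u (z + Pi.single i 1) j - u z j) ^ 2)
        + (∑ i : Fin d, ∑ j : Fin d, ∑' z : Fin d → ℤ, (u (z + Pi.single j 1) i - u z i) ^ 2)
        + 2 * ∑ i : Fin d, ∑ j : Fin d, ∑' z : Fin d → ℤ,
            (u (z + Pi.single i 1) j - u z j) * (u (z + Pi.single j 1) i - u z i) := by
    rw [Finset.sum_congr rfl fun i _ => Finset.sum_congr rfl fun j _ => hexp i j]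
    simp [Finset.sum_add_distrib, Finset.mul_sum]
  rw [hcomm] at hEq
  nlinarith [hCross, hsum18, hEq]

end DiscreteKornAux

open Classical in
/-- Discrete Korn's inequality: the full squared discrete gradient of `u_ε` (vanishing
outside `Q_ε`) is controlled by the discrete elastic energy of longitudinal differences
over the directions `b ∈ {-1,0,1}ᵈ ∖ {0}`. Lattice points of `εℤᵈ` are represented by
their integer coordinates `z`, so that `u_ε(εz) = u z` and `|b|² = ∑ᵢ bᵢ²`. -/
theorem discrete_korn (d : ℕ) (Q : Set (Fin d → ℝ)) (hQb : Bornology.IsBounded Q) :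
    ∃ C : ℝ, 0 < C ∧ ∀ ε : ℝ, 0 < ε → ∀ u : (Fin d → ℤ) → (Fin d → ℝ),
      (∀ z : Fin d → ℤ, (fun i => ε * (z i : ℝ)) ∉ Q → u z = 0) →
      ε ^ (d : ℤ) * ∑' z : Fin d → ℤ,
          (if (fun i => ε * (z i : ℝ)) ∈ Q then
            ∑ i, ε ^ (-2 : ℤ) * ∑ j, (u (z + Pi.single i 1) j - u z j) ^ 2
          else 0) ≤
        C * (ε ^ ((d : ℤ) - 2) * ∑' z : Fin d → ℤ,
          ∑ b ∈ (Finset.Icc (-1 : Fin d → ℤ) 1).erase 0,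
            ((∑ i, (u (z + b) i - u z i) * (b i : ℝ)) / (∑ i, ((b i : ℝ)) ^ 2)) ^ 2) := by
  classical
  obtain ⟨r, hr⟩ := hQb.subset_closedBall 0
  refine ⟨9 * (d : ℝ) ^ 2 + 1, by positivity, ?_⟩
  intro ε hε u hu
  set M : ℤ := ⌈(max r 0) / ε⌉ with hM
  -- support of u
  have hSsupp : ∀ z : Fin d → ℤ,
      z ∉ Finset.Icc (fun _ => -M) (fun _ : Fin d => M) → u z = 0 := by
    intro z hz
    refine hu z fun hmem => hz ?_
    have hnorm : ‖(fun i => ε * (z i : ℝ))‖ ≤ max r 0 := by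
      have h1 := hr hmem
      rw [Metric.mem_closedBall, dist_zero_right] at h1
      exact le_trans h1 (le_max_left _ _)
    have hco : ∀ i, |(z i : ℝ)| ≤ (M : ℝ) := by
      intro i
      have h1 : ‖(fun i => ε * (z i : ℝ)) i‖ ≤ max r 0 :=
        le_trans (norm_le_pi_norm (fun i => ε * (z i : ℝ)) i) hnorm
      rw [Real.norm_eq_abs] at h1
      simp only at h1
      rw [abs_mul, abs_of_pos hε] at h1
      have h2 : |(z i : ℝ)| ≤ (max r 0) / ε := by
        rw [le_div_iff₀ hε]
        linarith
      exact le_trans h2 (Int.le_ceil _)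
    refine Finset.mem_Icc.mpr ⟨Pi.le_def.mpr fun i => ?_, Pi.le_def.mpr fun i => ?_⟩
    · show -M ≤ z i
      have h1 := (abs_le.mp (hco i)).1
      have h2 : ((-M : ℤ) : ℝ) ≤ ((z i : ℤ) : ℝ) := by push_cast; push_cast at h1; linarith
      exact_mod_cast h2
    · show z i ≤ M
      have h1 := (abs_le.mp (hco i)).2
      have h2 : ((z i : ℤ) : ℝ) ≤ ((M : ℤ) : ℝ) := by push_cast at h1 ⊢; linarith
      exact_mod_cast h2
  have hcore := DiscreteKornAux.core u _ hSsupp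
  -- support of the summands in the left-hand side
  have hT1 : ∀ z : Fin d → ℤ,
      z ∉ Finset.Icc (fun _ => -(M + 1)) (fun _ : Fin d => (M + 1)) →
      u z = 0 ∧ ∀ i, u (z + Pi.single i 1) = 0 := by
    intro z hz
    have key : ∀ w : Fin d → ℤ, (∀ k, |w k - z k| ≤ 1) → u w = 0 := by
      intro w hw
      refine hSsupp w fun hmem => hz ?_
      rw [Finset.mem_Icc] at hmem
      refine Finset.mem_Icc.mpr ⟨Pi.le_def.mpr fun k => ?_, Pi.le_def.mpr fun k => ?_⟩ <;>
      · have h1 : -M ≤ w k := Pi.le_def.mp hmem.1 k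
        have h2 : w k ≤ M := Pi.le_def.mp hmem.2 k
        have h3 := abs_le.mp (hw k)
        show _
        omega
    refine ⟨key z fun k => by simp, fun i => key (z + Pi.single i 1) fun k => ?_⟩
    have hks : (z + Pi.single i 1 : Fin d → ℤ) k - z k = (Pi.single i 1 : Fin d → ℤ) k := by
      rw [Pi.add_apply]; ring
    rw [hks]
    exact DiscreteKornAux.abs_single_le i k
  have sIte : Summable fun z : Fin d → ℤ =>
      (if (fun i => ε * (z i : ℝ)) ∈ Q then
        ∑ i, ε ^ (-2 : ℤ) * ∑ j, (u (z + Pi.single i 1) j - u z j) ^ 2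
      else 0) := by
    refine summable_of_ne_finset_zero
      (s := Finset.Icc (fun _ => -(M + 1)) (fun _ : Fin d => (M + 1))) fun z hz => ?_
    obtain ⟨h0, h1⟩ := hT1 z hz
    simp [h0, h1]
  have sG : Summable fun z : Fin d → ℤ =>
      ∑ i, ∑ j, (u (z + Pi.single i 1) j - u z j) ^ 2 := by
    refine summable_of_ne_finset_zero
      (s := Finset.Icc (fun _ => -(M + 1)) (fun _ : Fin d => (M + 1))) fun z hz => ?_
    obtain ⟨h0, h1⟩ := hT1 z hz
    simp [h0, h1]
  have step1 : (∑' z : Fin d → ℤ,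
      (if (fun i => ε * (z i : ℝ)) ∈ Q then
        ∑ i, ε ^ (-2 : ℤ) * ∑ j, (u (z + Pi.single i 1) j - u z j) ^ 2
      else 0))
      ≤ ε ^ (-2 : ℤ) * ∑' z : Fin d → ℤ, ∑ i, ∑ j, (u (z + Pi.single i 1) j - u z j) ^ 2 := by
    refine le_trans (Summable.tsum_le_tsum (fun z => ?_) sIte (sG.mul_left _)) (le_of_eq tsum_mul_left)
    split_ifs
    · rw [← Finset.mul_sum]
    · positivity
  have hRnn : 0 ≤ DiscreteKornAux.Rsum u :=
    tsum_nonneg fun z => Finset.sum_nonneg fun b _ => sq_nonneg _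
  have hεd : (0 : ℝ) < ε ^ (d : ℤ) := zpow_pos hε _
  have hεd2 : (0 : ℝ) < ε ^ ((d : ℤ) - 2) := zpow_pos hε _
  have hfinal : ε ^ (d : ℤ) * (∑' z : Fin d → ℤ,
      (if (fun i => ε * (z i : ℝ)) ∈ Q then
        ∑ i, ε ^ (-2 : ℤ) * ∑ j, (u (z + Pi.single i 1) j - u z j) ^ 2
      else 0))
      ≤ (9 * (d : ℝ) ^ 2 + 1) * (ε ^ ((d : ℤ) - 2) * DiscreteKornAux.Rsum u) := by
    calc ε ^ (d : ℤ) * (∑' z : Fin d → ℤ,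
        (if (fun i => ε * (z i : ℝ)) ∈ Q then
          ∑ i, ε ^ (-2 : ℤ) * ∑ j, (u (z + Pi.single i 1) j - u z j) ^ 2
        else 0))
        ≤ ε ^ (d : ℤ) * (ε ^ (-2 : ℤ)
            * ∑' z : Fin d → ℤ, ∑ i, ∑ j, (u (z + Pi.single i 1) j - u z j) ^ 2) :=
          mul_le_mul_of_nonneg_left step1 (le_of_lt hεd)
      _ = ε ^ ((d : ℤ) - 2)
            * ∑' z : Fin d → ℤ, ∑ i, ∑ j, (u (z + Pi.single i 1) j - u z j) ^ 2 := by
          rw [← mul_assoc, ← zpow_add₀ (ne_of_gt hε), sub_eq_add_neg]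
      _ ≤ ε ^ ((d : ℤ) - 2) * (9 * (d : ℝ) ^ 2 * DiscreteKornAux.Rsum u) :=
          mul_le_mul_of_nonneg_left hcore (le_of_lt hεd2)
      _ ≤ (9 * (d : ℝ) ^ 2 + 1) * (ε ^ ((d : ℤ) - 2) * DiscreteKornAux.Rsum u) := by
          nlinarith [mul_nonneg (le_of_lt hεd2) hRnn]
  exact hfinal
end
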